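/- For a nonzero GEDM D built from the generalized Laplacian L: if D is a circum GEDM then rank(D) = rank(L) + 1; otherwise rank(D) = rank(L) + 2. -/

import Mathlib

/-!
Write `L = X Xᵀ` with `X` of full column rank `rank L`. Since `L 1 = 0` we get `Xᵀ 1 = 0`, so
`1` is not a column combination of `X` and `[1 | X]` still has full column rank.

If `d := diag L = α 1 + X w` lies in the column space of `[1 | X]`, completing the square gives
`D = s 1 1ᵀ - 2ab (X - (b/2a) 1 wᵀ) (X - (a/2b) 1 wᵀ)ᵀ` with `s = α (a² + b²) + (ab/2) |w|²`,
and `s > 0` because `n α = tr L > 0`. Otherwise `D = [d | 1 | X] diag(a², b², -2ab) [1 | d | X]ᵀ`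
with both outer factors of full column rank.

So in both cases `D = Y C Zᵀ` with `Y`, `Z` injective and `C` an invertible diagonal matrix. Then
`rank D = rank C`, and `D D† D = D` alone forces `1ᵀ D† 1 = fᵀ C⁻¹ e` whenever `Y e = 1 = Z f`:
this is `1 / s > 0` in the first case and `0` in the second.
-/

open Matrix Function

def IsMoorePenrose {n : ℕ} (D Dp : Matrix (Fin n) (Fin n) ℝ) : Prop :=
  D * Dp * D = D ∧ Dp * D * Dp = Dp ∧ (D * Dp)ᵀ = D * Dp ∧ (Dp * D)ᵀ = Dp * D

namespace Matrix

section PrependCol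

variable {m κ R : Type*}

def prependCol (u : m → R) (X : Matrix m κ R) : Matrix m (Unit ⊕ κ) R :=
  fromCols (replicateCol Unit u) X

@[simp]
theorem prependCol_apply_inl (u : m → R) (X : Matrix m κ R) (i : m) (x : Unit) :
    prependCol u X i (.inl x) = u i := rfl

@[simp]
theorem prependCol_apply_inr (u : m → R) (X : Matrix m κ R) (i : m) (j : κ) :
    prependCol u X i (.inr j) = X i j := rfl

end PrependCol

section Semiring

variable {m ι κ R : Type*} [CommSemiring R]

theorem dotProduct_mulVec_of_mul_mul_self [Fintype m] {D Dp : Matrix m m R}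
    (hDp : D * Dp * D = D) {u v x y : m → R} (hu : D *ᵥ u = x) (hv : v ᵥ* D = y) :
    y ⬝ᵥ (Dp *ᵥ x) = y ⬝ᵥ u := by
  rw [← hu, ← hv, dotProduct_mulVec, vecMul_vecMul, dotProduct_mulVec, vecMul_vecMul, hDp]

theorem injective_mulVec_submatrix_equiv {ι' : Type*} [Fintype ι] [Fintype ι']
    {Y : Matrix m ι R} (hY : Injective Y.mulVec) (e : ι' ≃ ι) :
    Injective (Y.submatrix id e).mulVec := by
  intro v w h
  simp only [submatrix_mulVec_equiv, comp_id] at h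
  ext i
  simpa using congrFun (hY h) (e i)

theorem submatrix_mul_transpose_submatrix_of_col_eq_zero [Fintype ι] (M : Matrix m ι R)
    {p : ι → Prop} [DecidablePred p] (h : ∀ j, ¬ p j → ∀ i, M i j = 0) :
    M.submatrix id (Subtype.val : Subtype p → ι) * (M.submatrix id (Subtype.val : Subtype p → ι))ᵀ
      = M * Mᵀ := by
  ext i k
  simp only [Matrix.mul_apply, submatrix_apply, transpose_apply, id]
  rw [← Fintype.sum_subtype_add_sum_subtype p,
    Fintype.sum_eq_zero (fun j : {j // ¬ p j} => M i j * M k j) fun j => by simp [h j j.2],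
    add_zero]

@[simp]
theorem prependCol_mulVec [Fintype κ] (u : m → R) (X : Matrix m κ R) (v : Unit ⊕ κ → R) :
    prependCol u X *ᵥ v = v (.inl ()) • u + X *ᵥ (v ∘ .inr) := by
  ext i
  simp [prependCol, mulVec, dotProduct, mul_comm]

end Semiring

section Field

variable {m ι κ K : Type*} [Field K]

theorem exists_mul_eq_one_of_injective_mulVec [Fintype m] [Fintype ι] [DecidableEq ι]
    {Y : Matrix m ι K} (hY : Injective Y.mulVec) : ∃ Yl : Matrix ι m K, Yl * Y = 1 := by
  classical
  obtain ⟨g, hg⟩ := Y.mulVecLin.exists_leftInverse_of_injective (LinearMap.ker_eq_bot.mpr hY)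
  refine ⟨LinearMap.toMatrix' g, ?_⟩
  rw [← LinearMap.toMatrix'_toLin' Y, ← LinearMap.toMatrix'_comp, Matrix.toLin'_apply', hg,
    LinearMap.toMatrix'_id]

theorem injective_mulVec_of_rank_eq_card [Fintype ι] {X : Matrix m ι K}
    (h : X.rank = Fintype.card ι) : Injective X.mulVec := by
  rw [mulVec_injective_iff, linearIndependent_iff_card_eq_finrank_span, Set.finrank,
    ← rank_eq_finrank_span_cols, h]

theorem one_notMem_range_mulVec [Fintype m] [Nonempty m] [CharZero K] [Fintype κ]
    {X : Matrix m κ K} (hX : Xᵀ *ᵥ 1 = 0) : 1 ∉ Set.range X.mulVec := by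
  rintro ⟨v, hv⟩
  have h : (1 : m → K) ⬝ᵥ 1 = 0 :=
    calc (1 : m → K) ⬝ᵥ 1 = 1 ⬝ᵥ (X *ᵥ v) := by rw [hv]
      _ = (Xᵀ *ᵥ 1) ⬝ᵥ v := by rw [dotProduct_mulVec, mulVec_transpose]
      _ = 0 := by rw [hX, zero_dotProduct]
  simp at h

theorem rank_diagonal_of_ne_zero [Fintype ι] [DecidableEq ι] {c : ι → K} (hc : ∀ k, c k ≠ 0) :
    (diagonal c).rank = Fintype.card ι := by
  classical
  rw [rank_diagonal, Fintype.card_congr (Equiv.subtypeUnivEquiv hc)]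

theorem injective_mulVec_prependCol [Fintype κ] {u : m → K} {X : Matrix m κ K}
    (hX : Injective X.mulVec) (hu : u ∉ Set.range X.mulVec) :
    Injective (prependCol u X).mulVec := by
  refine (injective_iff_map_eq_zero (prependCol u X).mulVecLin).mpr fun v hv => ?_
  simp only [mulVecLin_apply, prependCol_mulVec] at hv
  have h0 : v (.inl ()) = 0 := by
    by_contra ht
    refine hu ⟨-(v (.inl ()))⁻¹ • (v ∘ .inr), ?_⟩
    rw [mulVec_smul, eq_neg_of_add_eq_zero_right hv]
    simp [smul_smul, ht]
  have h1 : v ∘ .inr = 0 := hX (by simpa [h0] using hv)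
  ext (_ | j)
  · exact h0
  · exact congrFun h1 j

theorem injective_mulVec_prependCol_add_vecMulVec [Fintype κ] {u : m → K} {X : Matrix m κ K}
    (h : Injective (prependCol u X).mulVec) (w : κ → K) :
    Injective (prependCol u (X + vecMulVec u w)).mulVec := by
  have hshear (v : Unit ⊕ κ → K) : prependCol u (X + vecMulVec u w) *ᵥ v =
      prependCol u X *ᵥ Sum.elim (fun _ => v (.inl ()) + w ⬝ᵥ (v ∘ .inr)) (v ∘ .inr) := by
    ext i
    simp only [prependCol_mulVec, add_mulVec, vecMulVec_mulVec, op_smul_eq_smul, Pi.add_apply,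
      Pi.smul_apply, smul_eq_mul, Sum.elim_inl, Sum.elim_comp_inr]
    ring
  intro v v' hv
  have hsh := h ((hshear v).symm.trans (hv.trans (hshear v')))
  have h1 : v ∘ .inr = v' ∘ .inr := by simpa using congrArg (· ∘ Sum.inr) hsh
  have h0 := congrFun hsh (.inl ())
  simp only [h1, Sum.elim_inl, add_left_inj] at h0
  ext (_ | j)
  · exact h0
  · exact congrFun h1 j

variable [Fintype m] [Fintype ι] [DecidableEq ι]

theorem rank_mul_mul_transpose_of_injective {Y Z : Matrix m ι K}
    (hY : Injective Y.mulVec) (hZ : Injective Z.mulVec) (C : Matrix ι ι K) :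
    (Y * C * Zᵀ).rank = C.rank := by
  obtain ⟨Yl, hYl⟩ := exists_mul_eq_one_of_injective_mulVec hY
  obtain ⟨Zl, hZl⟩ := exists_mul_eq_one_of_injective_mulVec hZ
  refine le_antisymm ((rank_mul_le_left _ _).trans (rank_mul_le_right _ _)) ?_
  calc C.rank = (Yl * (Y * C * Zᵀ) * Zlᵀ).rank := by
        rw [show Yl * (Y * C * Zᵀ) * Zlᵀ = (Yl * Y) * C * (Zl * Z)ᵀ by
          simp only [transpose_mul, Matrix.mul_assoc], hYl, hZl, transpose_one, Matrix.one_mul,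
          Matrix.mul_one]
    _ ≤ (Y * C * Zᵀ).rank := (rank_mul_le_left _ _).trans (rank_mul_le_right _ _)

theorem dotProduct_mulVec_of_mul_diagonal_mul_transpose {Y Z : Matrix m ι K}
    (hY : Injective Y.mulVec) (hZ : Injective Z.mulVec) {c : ι → K} (hc : ∀ k, c k ≠ 0)
    {Dp : Matrix m m K}
    (hDp : Y * diagonal c * Zᵀ * Dp * (Y * diagonal c * Zᵀ) = Y * diagonal c * Zᵀ)
    {e f : ι → K} {x y : m → K} (he : Y *ᵥ e = x) (hf : Z *ᵥ f = y) :
    y ⬝ᵥ (Dp *ᵥ x) = f ⬝ᵥ (e / c) := by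
  obtain ⟨Yl, hYl⟩ := exists_mul_eq_one_of_injective_mulVec hY
  obtain ⟨Zl, hZl⟩ := exists_mul_eq_one_of_injective_mulVec hZ
  have hZZl (g : ι → K) : Zᵀ *ᵥ (Zlᵀ *ᵥ g) = g := by
    rw [mulVec_mulVec, ← transpose_mul, hZl, transpose_one, one_mulVec]
  rw [dotProduct_mulVec_of_mul_mul_self hDp (u := Zlᵀ *ᵥ (e / c)) (v := (f / c) ᵥ* Yl)]
  · rw [← hf, dotProduct_comm, dotProduct_mulVec, ← mulVec_transpose, hZZl, dotProduct_comm]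
  · rw [← he, ← mulVec_mulVec, ← mulVec_mulVec, hZZl]
    congr 1
    ext k
    simp [mulVec_diagonal, mul_div_cancel₀ _ (hc k)]
  · rw [← hf, ← vecMul_transpose, Matrix.mul_assoc, ← vecMul_vecMul, ← vecMul_vecMul,
      vecMul_vecMul _ Yl, hYl, vecMul_one]
    congr 1
    ext k
    simp [vecMul_diagonal, div_mul_cancel₀ _ (hc k)]

end Field

theorem PosSemidef.exists_mul_transpose_eq {n : Type*} [Fintype n] [DecidableEq n]
    {L : Matrix n n ℝ} (hL : L.PosSemidef) :
    ∃ X : Matrix n {j // hL.1.eigenvalues j ≠ 0} ℝ, X * Xᵀ = L := by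
  set U : Matrix n n ℝ := ↑hL.1.eigenvectorUnitary
  set M := U * diagonal fun j => √(hL.1.eigenvalues j)
  refine ⟨M.submatrix id Subtype.val, ?_⟩
  rw [submatrix_mul_transpose_submatrix_of_col_eq_zero]
  · conv_rhs => rw [hL.1.spectral_theorem]
    simp [M, U, transpose_mul, Matrix.mul_assoc, ← Matrix.mul_assoc (diagonal _) (diagonal _),
      Real.mul_self_sqrt (hL.eigenvalues_nonneg _), star_eq_conjTranspose]
  · intro j hj i
    simp [M, not_not.mp hj]

end Matrix

-- `a² L̃ J + b² J L̃ - 2ab L` with `L̃ = Diag (diag L)` and `J = 1 1ᵀ`.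
def gedm {m : Type*} (L : Matrix m m ℝ) (a b : ℝ) : Matrix m m ℝ :=
  of fun i j => a ^ 2 * L i i + b ^ 2 * L j j - 2 * a * b * L i j

section GEDM

variable {m κ : Type*} [Fintype κ] {L Dp : Matrix m m ℝ} {X : Matrix m κ ℝ} {a b : ℝ}

theorem pos_of_diag_eq_smul_one_add_mulVec [Fintype m] (hL : L.PosSemidef) (hL0 : L ≠ 0)
    (hX1 : Xᵀ *ᵥ 1 = 0) {α : ℝ} {w : κ → ℝ} (hdiag : L.diag = α • 1 + X *ᵥ w) : 0 < α := by
  have htr : 0 < L.trace := hL.trace_nonneg.lt_of_ne' (hL.trace_eq_zero_iff.not.mpr hL0)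
  have : L.trace = α * Fintype.card m :=
    calc L.trace = L.diag ⬝ᵥ 1 := by simp [trace, dotProduct]
      _ = α * Fintype.card m + (Xᵀ *ᵥ 1) ⬝ᵥ w := by
        rw [hdiag, add_dotProduct, smul_dotProduct, dotProduct_comm (X *ᵥ w), dotProduct_mulVec,
          ← mulVec_transpose]
        simp
      _ = α * Fintype.card m := by rw [hX1, zero_dotProduct, add_zero]
  rw [this] at htr
  exact pos_of_mul_pos_left htr (Nat.cast_nonneg _)

variable [DecidableEq κ]

theorem gedm_eq_mul_diagonal_mul_transpose (hXL : X * Xᵀ = L) :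
    gedm L a b = prependCol L.diag (prependCol (1 : m → ℝ) X) *
      diagonal (Sum.elim (fun _ : Unit => a ^ 2) (Sum.elim (fun _ : Unit => b ^ 2)
        (fun _ : κ => -(2 * a * b)))) *
      ((prependCol L.diag (prependCol (1 : m → ℝ) X)).submatrix id
        (Equiv.swap (.inl ()) (.inr (.inl ()))))ᵀ := by
  ext i k
  have key : ∑ j, X i j * -(2 * a * b) * X k j = -(2 * a * b) * L i k := by
    rw [← hXL, Matrix.mul_apply, Finset.mul_sum]
    exact Finset.sum_congr rfl fun j _ => by rw [transpose_apply]; ring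
  rw [gedm, of_apply, Matrix.mul_apply]
  simp only [Fintype.sum_sum_type, Finset.univ_unique, Finset.sum_singleton, mul_diagonal,
    transpose_apply, submatrix_apply, id_eq, Equiv.swap_apply_left, Equiv.swap_apply_right,
    ne_eq, reduceCtorEq, Sum.inr.injEq, not_false_eq_true, Equiv.swap_apply_of_ne_of_ne,
    prependCol_apply_inl, prependCol_apply_inr, Sum.elim_inl, Sum.elim_inr, Matrix.diag_apply,
    Pi.one_apply, key]
  ring

theorem gedm_eq_mul_diagonal_mul_transpose_of_diag_eq (hXL : X * Xᵀ = L) {α : ℝ} {w : κ → ℝ}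
    (hdiag : L.diag = α • 1 + X *ᵥ w) (ha : a ≠ 0) (hb : b ≠ 0) :
    gedm L a b = prependCol (1 : m → ℝ) (X + vecMulVec 1 (-(b / (2 * a)) • w)) *
      diagonal (Sum.elim (fun _ : Unit => α * (a ^ 2 + b ^ 2) + a * b / 2 * (w ⬝ᵥ w))
        (fun _ : κ => -(2 * a * b))) *
      (prependCol (1 : m → ℝ) (X + vecMulVec 1 (-(a / (2 * b)) • w)))ᵀ := by
  ext i k
  have hd (i : m) : L i i = α + X i ⬝ᵥ w := by simpa [mulVec] using congrFun hdiag i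
  have hL (i k : m) : L i k = X i ⬝ᵥ X k := by rw [← hXL]; rfl
  have key : ∑ j, (X i j + -(b / (2 * a)) * w j) * -(2 * a * b) * (X k j + -(a / (2 * b)) * w j) =
      -(2 * a * b) * (X i ⬝ᵥ X k) + a ^ 2 * (X i ⬝ᵥ w) + b ^ 2 * (X k ⬝ᵥ w)
        - a * b / 2 * (w ⬝ᵥ w) := by
    simp only [dotProduct, Finset.mul_sum, ← Finset.sum_add_distrib, ← Finset.sum_sub_distrib]
    refine Finset.sum_congr rfl fun j _ => ?_
    field_simp
    ring
  rw [gedm, of_apply, hd, hd, hL, Matrix.mul_apply]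
  simp only [Fintype.sum_sum_type, Finset.univ_unique, Finset.sum_singleton, mul_diagonal,
    transpose_apply, prependCol_apply_inl, prependCol_apply_inr, Sum.elim_inl, Sum.elim_inr,
    Pi.one_apply, Matrix.add_apply, vecMulVec_apply, one_mul, Pi.smul_apply, smul_eq_mul, key]
  ring

variable [Fintype m]

theorem rank_gedm_eq_and_one_dotProduct_pos_of_diag_eq (hXL : X * Xᵀ = L)
    (hY : Injective (prependCol (1 : m → ℝ) X).mulVec) (ha : 0 < a) (hb : 0 < b)
    (hDp : gedm L a b * Dp * gedm L a b = gedm L a b) {α : ℝ} (hα : 0 < α) {w : κ → ℝ}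
    (hdiag : L.diag = α • 1 + X *ᵥ w) :
    (gedm L a b).rank = Fintype.card κ + 1 ∧ 0 < 1 ⬝ᵥ (Dp *ᵥ 1) := by
  have hs : 0 < α * (a ^ 2 + b ^ 2) + a * b / 2 * (w ⬝ᵥ w) := by
    have : 0 ≤ w ⬝ᵥ w := Finset.sum_nonneg fun j _ => mul_self_nonneg (w j)
    positivity
  have hc : ∀ k, Sum.elim (fun _ : Unit => α * (a ^ 2 + b ^ 2) + a * b / 2 * (w ⬝ᵥ w))
      (fun _ : κ => -(2 * a * b)) k ≠ 0 := by
    rintro (_ | _)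
    · exact hs.ne'
    · simp [ha.ne', hb.ne']
  have hYw := injective_mulVec_prependCol_add_vecMulVec hY (-(b / (2 * a)) • w)
  have hZw := injective_mulVec_prependCol_add_vecMulVec hY (-(a / (2 * b)) • w)
  rw [gedm_eq_mul_diagonal_mul_transpose_of_diag_eq hXL hdiag ha.ne' hb.ne'] at hDp ⊢
  refine ⟨?_, ?_⟩
  · rw [rank_mul_mul_transpose_of_injective hYw hZw, rank_diagonal_of_ne_zero hc,
      Fintype.card_sum, Fintype.card_unit, add_comm]
  · rw [dotProduct_mulVec_of_mul_diagonal_mul_transpose hYw hZw hc hDp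
      (e := Sum.elim 1 0) (f := Sum.elim 1 0) (by simp) (by simp)]
    simpa [dotProduct, Fintype.sum_sum_type] using hs

theorem rank_gedm_eq_and_one_dotProduct_eq_zero_of_diag_notMem_range (hXL : X * Xᵀ = L)
    (hY : Injective (prependCol (1 : m → ℝ) X).mulVec)
    (hdiag : L.diag ∉ Set.range (prependCol (1 : m → ℝ) X).mulVec) (ha : 0 < a) (hb : 0 < b)
    (hDp : gedm L a b * Dp * gedm L a b = gedm L a b) :
    (gedm L a b).rank = Fintype.card κ + 2 ∧ 1 ⬝ᵥ (Dp *ᵥ 1) = 0 := by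
  have hc : ∀ k, Sum.elim (fun _ : Unit => a ^ 2) (Sum.elim (fun _ : Unit => b ^ 2)
      (fun _ : κ => -(2 * a * b))) k ≠ 0 := by
    rintro (_ | _ | _) <;> simp [ha.ne', hb.ne']
  have hY' := injective_mulVec_prependCol hY hdiag
  have hZ' := injective_mulVec_submatrix_equiv hY' (Equiv.swap (.inl ()) (.inr (.inl ())))
  rw [gedm_eq_mul_diagonal_mul_transpose hXL] at hDp ⊢
  refine ⟨?_, ?_⟩
  · rw [rank_mul_mul_transpose_of_injective hY' hZ', rank_diagonal_of_ne_zero hc]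
    simp only [Fintype.card_sum, Fintype.card_unit]
    ring
  · rw [dotProduct_mulVec_of_mul_diagonal_mul_transpose hY' hZ' hc hDp
      (e := Sum.elim 0 (Sum.elim 1 0)) (f := Sum.elim 1 0) (by simp) ?_]
    · simp [dotProduct, Fintype.sum_sum_type]
    · ext i
      simp [mulVec, dotProduct]

end GEDM

/-- For a nonzero GEDM `D`: if `D` is a circum GEDM (i.e. `1ᵀ D† 1 > 0`) then
`rank D = rank L + 1`; otherwise `rank D = rank L + 2`. -/
theorem stmt17 (n : ℕ) (L D : Matrix (Fin n) (Fin n) ℝ) (hL : L.PosSemidef)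
    (hL1 : L *ᵥ (fun _ => (1 : ℝ)) = 0) (hL0 : L ≠ 0)
    (a b : ℝ) (ha : 0 < a) (hb : 0 < b)
    (hD : ∀ i j, D i j = a ^ 2 * L i i + b ^ 2 * L j j - 2 * a * b * L i j)
    (Dp : Matrix (Fin n) (Fin n) ℝ) (hDp : IsMoorePenrose D Dp) :
    (0 < (fun _ => (1 : ℝ)) ⬝ᵥ (Dp *ᵥ fun _ => (1 : ℝ)) → D.rank = L.rank + 1) ∧
    (¬ 0 < (fun _ => (1 : ℝ)) ⬝ᵥ (Dp *ᵥ fun _ => (1 : ℝ)) → D.rank = L.rank + 2) := by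
  obtain rfl : D = gedm L a b := Matrix.ext hD
  obtain ⟨X, hXL⟩ := hL.exists_mul_transpose_eq
  have hrank : L.rank = Fintype.card _ := hL.1.rank_eq_card_non_zero_eigs
  have hX : Injective X.mulVec :=
    injective_mulVec_of_rank_eq_card (by rw [← rank_self_mul_transpose, hXL, hrank])
  have hX1 : Xᵀ *ᵥ 1 = 0 := by
    have h : (1 : Fin n → ℝ) ∈ LinearMap.ker (Xᵀᵀ * Xᵀ).mulVecLin := by
      rw [LinearMap.mem_ker, mulVecLin_apply, transpose_transpose, hXL]
      exact hL1
    rwa [ker_mulVecLin_transpose_mul_self, LinearMap.mem_ker, mulVecLin_apply] at h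
  have : Nonempty (Fin n) := not_isEmpty_iff.mp fun _ => hL0 (Subsingleton.elim _ _)
  have hY := injective_mulVec_prependCol hX (one_notMem_range_mulVec hX1)
  by_cases hdiag : L.diag ∈ Set.range (prependCol (1 : Fin n → ℝ) X).mulVec
  · obtain ⟨p, hp⟩ := hdiag
    rw [prependCol_mulVec] at hp
    obtain ⟨hrk, hpos⟩ := rank_gedm_eq_and_one_dotProduct_pos_of_diag_eq hXL hY ha hb hDp.1
      (pos_of_diag_eq_smul_one_add_mulVec hL hL0 hX1 hp.symm) hp.symm
    exact ⟨fun _ => by rw [hrk, hrank], fun h => absurd hpos h⟩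
  · obtain ⟨hrk, hzero⟩ :=
      rank_gedm_eq_and_one_dotProduct_eq_zero_of_diag_notMem_range hXL hY hdiag ha hb hDp.1
    exact ⟨fun h => absurd hzero h.ne', fun _ => by rw [hrk, hrank]⟩
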